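/- arXiv:0710.0639 — 3 statements merged into one kernel-verified Lean document; each statement's English description precedes it below -/
import Mathlib

section
/- Let J : V → W be a linear map and L ⊆ V ⊕ V* a lagrangian subspace. Then the forward image J∘L := { (J(X), β) ∈ W ⊕ W* : X ∈ V, β ∈ W*, (X, J*β) ∈ L } is a lagrangian subspace of W ⊕ W* with respect to the canonical pairing. -/
/-- The forward image of `L` under `J`. -/
def forwardImage {V W : Type*} [AddCommGroup V] [Module ℝ V] [AddCommGroup W] [Module ℝ W]
    (J : V →ₗ[ℝ] W) (L : Submodule ℝ (V × Module.Dual ℝ V)) :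
    Set (W × Module.Dual ℝ W) :=
  {p | ∃ (X : V) (β : Module.Dual ℝ W), p = (J X, β) ∧ (X, J.dualMap β) ∈ L}

/-- The forward image of a lagrangian subspace under a linear map
is lagrangian (equal to its own orthogonal) for the canonical pairing. -/
theorem forwardImage_lagrangian {V W : Type*} [AddCommGroup V] [Module ℝ V]
    [FiniteDimensional ℝ V] [AddCommGroup W] [Module ℝ W] [FiniteDimensional ℝ W]
    (J : V →ₗ[ℝ] W) (L : Submodule ℝ (V × Module.Dual ℝ V))
    (hL : ∀ x : V × Module.Dual ℝ V, x ∈ L ↔ ∀ y ∈ L, y.2 x.1 + x.2 y.1 = 0) :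
    ∀ p : W × Module.Dual ℝ W,
      p ∈ forwardImage J L ↔ ∀ q ∈ forwardImage J L, q.2 p.1 + p.2 q.1 = 0 := by
  intro p
  constructor
  · rintro ⟨X, β, rfl, hX⟩ q ⟨X', β', rfl, hX'⟩
    have := (hL _).mp hX _ hX'
    simpa using this
  · intro h
    -- K₁ = {X : (X, 0) ∈ L}
    set K₁ : Submodule ℝ V := L.comap (LinearMap.inl ℝ V (Module.Dual ℝ V)) with hK₁def
    have hK₁mem : ∀ X : V, X ∈ K₁ ↔ (X, (0 : Module.Dual ℝ V)) ∈ L := fun X => Iff.rfl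
    -- pr₂ L
    set P : Submodule ℝ (Module.Dual ℝ V) := L.map (LinearMap.snd ℝ V (Module.Dual ℝ V))
      with hPdef
    -- K₁ = P.dualCoannihilator
    have hKP : K₁ = P.dualCoannihilator := by
      ext X
      rw [hK₁mem, Submodule.mem_dualCoannihilator]
      constructor
      · rintro hX0 φ ⟨⟨X', α'⟩, hy, rfl⟩
        have := (hL _).mp hX0 _ hy
        simpa using this
      · intro hφ
        rw [hL]
        rintro ⟨X', α'⟩ hy
        have := hφ α' ⟨(X', α'), hy, rfl⟩
        simpa using this
    -- hence P = K₁.dualAnnihilator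
    have hPK : P = K₁.dualAnnihilator := by
      rw [hKP, Subspace.dualCoannihilator_dualAnnihilator_eq]
    -- Step 1: J.dualMap p.2 ∈ P, i.e. ∃ X₀, (X₀, J.dualMap p.2) ∈ L
    have h1 : J.dualMap p.2 ∈ P := by
      rw [hPK, Submodule.mem_dualAnnihilator]
      intro X₁ hX₁
      have hq : ((J X₁, 0) : W × Module.Dual ℝ W) ∈ forwardImage J L :=
        ⟨X₁, 0, rfl, by simpa using (hK₁mem X₁).mp hX₁⟩
      have := h _ hq
      simpa using this
    obtain ⟨⟨X₀, α₀⟩, hX₀L, hα₀⟩ := h1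
    simp only [LinearMap.snd_apply] at hα₀
    subst hα₀
    -- Step 2: p.1 - J X₀ ∈ K₁.map J
    have h2 : p.1 - J X₀ ∈ K₁.map J := by
      rw [← Subspace.dualAnnihilator_dualCoannihilator_eq (W := K₁.map J),
        Submodule.mem_dualCoannihilator]
      intro β' hβ'
      rw [Submodule.mem_dualAnnihilator] at hβ'
      -- J.dualMap β' ∈ P
      have hβ'P : J.dualMap β' ∈ P := by
        rw [hPK, Submodule.mem_dualAnnihilator]
        intro X₁ hX₁
        exact hβ' (J X₁) ⟨X₁, hX₁, rfl⟩
      obtain ⟨⟨X', α'⟩, hX'L, hα'⟩ := hβ'P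
      simp only [LinearMap.snd_apply] at hα'
      subst hα'
      have hq : ((J X', β') : W × Module.Dual ℝ W) ∈ forwardImage J L :=
        ⟨X', β', rfl, hX'L⟩
      have e1 := h _ hq
      have e2 := (hL _).mp hX₀L _ hX'L
      simp only [LinearMap.dualMap_apply] at e1 e2 ⊢
      simp only [map_sub]
      linarith
    obtain ⟨X₁, hX₁, hJX₁⟩ := h2
    refine ⟨X₀ + X₁, p.2, ?_, ?_⟩
    · have : J (X₀ + X₁) = p.1 := by
        rw [map_add, hJX₁]; abel
      rw [this]
    · have : ((X₀ + X₁, J.dualMap p.2) : V × Module.Dual ℝ V)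
        = (X₀, J.dualMap p.2) + (X₁, 0) := by simp [Prod.ext_iff]
      rw [this]
      exact L.add_mem hX₀L ((hK₁mem X₁).mp hX₁)
end

section
/- Let E be a vector space with nondegenerate symmetric bilinear form ⟨·,·⟩, let V be a vector space, and let ρ : E → V be linear with adjoint ρ* : V* → E defined by ⟨ρ*(α), e⟩ = α(ρ(e)); assume ρ ∘ ρ* = 0. If L, C ⊆ E are transversal lagrangian subspaces (E = L ⊕ C), with ρ_L := ρ|_L and ρ_C := ρ|_C, and C is identified with L* via the pairing, then ρ_L ∘ (ρ_C)* + ρ_C ∘ (ρ_L)* = 0. Consequently the map π^♯ := ρ_L ∘ (ρ_C)* : V* → V is skew-symmetric, i.e., defines a bivector π ∈ ∧²V. -/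
/-- Given `ρ : E → V` with `ρ ρ* = 0` and transversal lagrangians
`L, C ⊆ E`, one has `ρ_L (ρ_C)* + ρ_C (ρ_L)* = 0`, so
`π^♯ = ρ_L (ρ_C)* : V* → V` is skew-symmetric, i.e. defines a bivector. -/
theorem bivector_from_transversal_lagrangians {E V : Type*}
    [AddCommGroup E] [Module ℝ E] [FiniteDimensional ℝ E]
    [AddCommGroup V] [Module ℝ V] [FiniteDimensional ℝ V]
    (B : E →ₗ[ℝ] E →ₗ[ℝ] ℝ) (hsymm : ∀ x y : E, B x y = B y x)
    (hnondeg : ∀ x : E, (∀ y : E, B x y = 0) → x = 0)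
    (ρ : E →ₗ[ℝ] V) (ρstar : Module.Dual ℝ V →ₗ[ℝ] E)
    (hρstar : ∀ (α : Module.Dual ℝ V) (e : E), B (ρstar α) e = α (ρ e))
    (h0 : ∀ α : Module.Dual ℝ V, ρ (ρstar α) = 0)
    (L C : Submodule ℝ E)
    (hL : ∀ x : E, x ∈ L ↔ ∀ y ∈ L, B x y = 0)
    (hC : ∀ x : E, x ∈ C ↔ ∀ y ∈ C, B x y = 0)
    (htrans : L ⊓ C = ⊥) (hspan : L ⊔ C = ⊤)
    -- `(ρ_C)*` : takes values in `L ≅ C*`, characterized by pairing against `C`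
    (πC : Module.Dual ℝ V →ₗ[ℝ] E)
    (hπC1 : ∀ α, πC α ∈ L)
    (hπC2 : ∀ α : Module.Dual ℝ V, ∀ c ∈ C, B (πC α) c = α (ρ c))
    -- `(ρ_L)*` : takes values in `C ≅ L*`, characterized by pairing against `L`
    (πL : Module.Dual ℝ V →ₗ[ℝ] E)
    (hπL1 : ∀ α, πL α ∈ C)
    (hπL2 : ∀ α : Module.Dual ℝ V, ∀ l ∈ L, B (πL α) l = α (ρ l)) :
    (∀ α : Module.Dual ℝ V, ρ (πC α) + ρ (πL α) = 0) ∧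
    (∀ α β : Module.Dual ℝ V, α (ρ (πC β)) = - β (ρ (πC α))) := by
  have key : ∀ α : Module.Dual ℝ V, πC α + πL α = ρstar α := by
    intro α
    have h : ∀ e : E, B (πC α + πL α - ρstar α) e = 0 := by
      intro e
      have he : e ∈ L ⊔ C := hspan ▸ Submodule.mem_top
      rcases Submodule.mem_sup.mp he with ⟨l, hl, c, hc, rfl⟩
      have h1 : B (πC α) l = 0 := (hL (πC α)).mp (hπC1 α) l hl
      have h2 : B (πL α) c = 0 := (hC (πL α)).mp (hπL1 α) c hc
      have h3 : B (πC α) c = α (ρ c) := hπC2 α c hc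
      have h4 : B (πL α) l = α (ρ l) := hπL2 α l hl
      have h5 : B (ρstar α) l = α (ρ l) := hρstar α l
      have h6 : B (ρstar α) c = α (ρ c) := hρstar α c
      simp only [map_sub, map_add, LinearMap.sub_apply, LinearMap.add_apply]
      rw [h1, h2, h3, h4, h5, h6]; ring
    exact sub_eq_zero.mp (hnondeg _ h)
  have hsum : ∀ α : Module.Dual ℝ V, ρ (πC α) + ρ (πL α) = 0 := by
    intro α
    have := congrArg ρ (key α)
    rw [map_add, h0 α] at this
    exact this
  refine ⟨hsum, fun α β => ?_⟩
  have e1 : α (ρ (πC β)) = B (ρstar α) (πC β) := (hρstar α (πC β)).symm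
  have e2 : B (ρstar α) (πC β) = B (πC β) (ρstar α) := hsymm _ _
  have e3 : B (πC β) (ρstar α) = B (πC β) (πC α) + B (πC β) (πL α) := by
    rw [← key α, map_add]
  have e4 : B (πC β) (πC α) = 0 := (hL (πC β)).mp (hπC1 β) _ (hπC1 α)
  have e5 : B (πC β) (πL α) = β (ρ (πL α)) := hπC2 β _ (hπL1 α)
  have e6 : ρ (πL α) = - ρ (πC α) := by
    exact eq_neg_of_add_eq_zero_right (hsum α)
  rw [e1, e2, e3, e4, e5, e6, map_neg]
  ring
end

section
/- Let J : V → W be linear, L_W ⊆ W ⊕ W* lagrangian, and L ⊆ V ⊕ V* lagrangian such that J is a strong Dirac map: the forward image of L under J equals L_W, and ker(J) ∩ L ∩ V = {0} (where V is embedded as V ⊕ {0}). Then for every (w, β) ∈ L_W there exists a unique v ∈ V with J(v) = w and (v, J*β) ∈ L; this defines a linear map ρ_V : L_W → V with J ∘ ρ_V = pr_W|_{L_W}. -/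
/-- A strong Dirac map `J : (V,L) → (W,L_W)` induces, for each
`(w,β) ∈ L_W`, a unique `v` with `J v = w` and `(v, J*β) ∈ L`; this defines a
linear map `ρ_V : L_W → V` with `J ∘ ρ_V = pr_W`. -/
theorem strong_dirac_induced_action {V W : Type*}
    [AddCommGroup V] [Module ℝ V] [FiniteDimensional ℝ V]
    [AddCommGroup W] [Module ℝ W] [FiniteDimensional ℝ W]
    (J : V →ₗ[ℝ] W)
    (L : Submodule ℝ (V × Module.Dual ℝ V))
    (LW : Submodule ℝ (W × Module.Dual ℝ W))
    (hL : ∀ x : V × Module.Dual ℝ V, x ∈ L ↔ ∀ y ∈ L, y.2 x.1 + x.2 y.1 = 0)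
    (hLW : ∀ x : W × Module.Dual ℝ W, x ∈ LW ↔ ∀ y ∈ LW, y.2 x.1 + x.2 y.1 = 0)
    (hfwd : ∀ q : W × Module.Dual ℝ W,
        q ∈ LW ↔ ∃ (X : V) (β : Module.Dual ℝ W), q = (J X, β) ∧ (X, J.dualMap β) ∈ L)
    (hker : ∀ X : V, J X = 0 → (X, (0 : Module.Dual ℝ V)) ∈ L → X = 0) :
    (∀ q ∈ LW, ∃! v : V, J v = q.1 ∧ (v, J.dualMap q.2) ∈ L) ∧
    (∃ ρV : LW →ₗ[ℝ] V, ∀ q : LW,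
        J (ρV q) = (q : W × Module.Dual ℝ W).1 ∧
        (ρV q, J.dualMap (q : W × Module.Dual ℝ W).2) ∈ L) := by
  have hEU : ∀ q ∈ LW, ∃! v : V, J v = q.1 ∧ (v, J.dualMap q.2) ∈ L := by
    intro q hq
    obtain ⟨X, β, hEq, hXL⟩ := (hfwd q).mp hq
    refine ⟨X, ⟨?_, ?_⟩, ?_⟩
    · rw [hEq]
    · rw [hEq]; exact hXL
    · intro v hv
      subst hEq
      have hdiff : (v - X, (0 : Module.Dual ℝ V)) ∈ L := by
        have := L.sub_mem hv.2 hXL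
        simpa using this
      have hJ : J (v - X) = 0 := by
        rw [map_sub, hv.1]; simp
      have := hker _ hJ hdiff
      exact sub_eq_zero.mp this
  refine ⟨hEU, ?_⟩
  have hchoice : ∀ q : LW, ∃! v : V,
      J v = (q : W × Module.Dual ℝ W).1 ∧ (v, J.dualMap (q : W × Module.Dual ℝ W).2) ∈ L :=
    fun q => hEU q q.2
  choose f hf hunique using fun q : LW => (hchoice q).exists
  have huniq : ∀ (q : LW) (v : V),
      J v = (q : W × Module.Dual ℝ W).1 ∧ (v, J.dualMap (q : W × Module.Dual ℝ W).2) ∈ L →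
      v = f q := fun q v hv => (hchoice q).unique hv ⟨hf q, hunique q⟩
  refine ⟨{ toFun := f
            map_add' := ?_
            map_smul' := ?_ }, fun q => ⟨hf q, hunique q⟩⟩
  · intro p q
    refine (hchoice (p + q)).unique ⟨hf (p+q), hunique (p+q)⟩ ⟨?_, ?_⟩
    · simp [map_add, hf p, hf q]
    · have := L.add_mem (hunique p) (hunique q)
      simpa [Prod.add_def, map_add] using this
  · intro c p
    refine (hchoice (c • p)).unique ⟨hf (c • p), hunique (c • p)⟩ ⟨?_, ?_⟩
    · simp [map_smul, hf p]
    · have := L.smul_mem c (hunique p)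
      simpa [Prod.smul_def, map_smul] using this
end
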